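/- arXiv:2507.03096 — 6 statements merged into one kernel-verified Lean document; each statement's English description precedes it below -/
import Mathlib

section
/- Let d ≥ 3 and l ≥ 1. Suppose f_1,…,f_l : ℂ^l → ℂ are real-differentiable and satisfy (H1), (H2), (H3) and (H5). Then there is a constant C' > 0 such that for all z, z' ∈ ℂ^l, |Re F(z) − Re F(z')| ≤ C' Σ_{m=1}^l Σ_{j=1}^l (|z_j|^{(d+2)/(d−2)} + |z'_j|^{(d+2)/(d−2)}) |z_m − z'_m|. -/
open Complex Finset

/-- The Wirtinger derivative `∂/∂z_m` of a real-differentiable function `f : ℂ^l → ℂ`. -/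
noncomputable def wD {l : ℕ} (f : (Fin l → ℂ) → ℂ) (z : Fin l → ℂ) (m : Fin l) : ℂ :=
  (1 / 2 : ℂ) *
    ((fderiv ℝ f z) (Pi.single m 1) - Complex.I * (fderiv ℝ f z) (Pi.single m Complex.I))

/-- The Wirtinger derivative `∂/∂z̄_m` of a real-differentiable function `f : ℂ^l → ℂ`. -/
noncomputable def wDbar {l : ℕ} (f : (Fin l → ℂ) → ℂ) (z : Fin l → ℂ) (m : Fin l) : ℂ :=
  (1 / 2 : ℂ) *
    ((fderiv ℝ f z) (Pi.single m 1) + Complex.I * (fderiv ℝ f z) (Pi.single m Complex.I))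

/-!
Since `f_k = ∂F/∂z̄_k + conj (∂F/∂z_k)`, the vector `f(z)` is the real gradient of `Re F` at `z`,
so by the mean value theorem `|Re F(z) − Re F(z')| ≤ sup_{‖x‖ ≤ R} Σ_k |f_k(x)| · ‖z − z'‖` with
`R = max (‖z‖, ‖z'‖)`. The Hölder bound (H2) with exponent `q = 4/(d−2)` gives
`‖Df_k(u)‖ ≤ ‖Df_k(0)‖ + c ‖u‖^q`, and then (H1) gives `|f_k(x)| ≤ (‖Df_k(0)‖ + c R^q) R`.
The resulting estimate `(A + c' R^q) R ‖z − z'‖` has the wrong homogeneity in its `A` term: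
since `Re F` is homogeneous of degree `q + 2` by (H5), rescaling `z, z'` by `t → ∞` removes it,
leaving `c' R^(q+1) ‖z − z'‖` with `q + 1 = (d+2)/(d−2)`.
-/

open ComplexConjugate

lemma pi_norm_rpow_le_sum_rpow {ι E : Type*} [Fintype ι] [SeminormedAddCommGroup E] (u : ι → E)
    {p : ℝ} (hp : 0 < p) : ‖u‖ ^ p ≤ ∑ i, ‖u i‖ ^ p := by
  have hs : 0 ≤ ∑ i, ‖u i‖ ^ p := by positivity
  have hu : ‖u‖ ≤ (∑ i, ‖u i‖ ^ p) ^ p⁻¹ := by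
    refine (pi_norm_le_iff_of_nonneg (by positivity)).2 fun i => ?_
    calc ‖u i‖ = (‖u i‖ ^ p) ^ p⁻¹ := (Real.rpow_rpow_inv (norm_nonneg _) hp.ne').symm
      _ ≤ (∑ i, ‖u i‖ ^ p) ^ p⁻¹ := by
          gcongr
          exact Finset.single_le_sum (f := fun j => ‖u j‖ ^ p) (fun j _ => by positivity)
            (Finset.mem_univ i)
  calc ‖u‖ ^ p ≤ ((∑ i, ‖u i‖ ^ p) ^ p⁻¹) ^ p := by gcongr
    _ = ∑ i, ‖u i‖ ^ p := Real.rpow_inv_rpow hs hp.ne'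

lemma sum_rpow_le_card_mul_pi_norm_rpow {ι E : Type*} [Fintype ι] [SeminormedAddCommGroup E]
    (u : ι → E) {q : ℝ} (hq : 0 ≤ q) : ∑ i, ‖u i‖ ^ q ≤ Fintype.card ι * ‖u‖ ^ q := by
  calc ∑ i, ‖u i‖ ^ q ≤ ∑ _i : ι, ‖u‖ ^ q := by
        gcongr with i; exact norm_le_pi_norm u i
    _ = Fintype.card ι * ‖u‖ ^ q := by simp

lemma max_norm_rpow_mul_norm_sub_le {ι E : Type*} [Fintype ι] [SeminormedAddCommGroup E]
    (z z' : ι → E) {p : ℝ} (hp : 0 < p) :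
    max ‖z‖ ‖z'‖ ^ p * ‖z - z'‖ ≤
      ∑ m, ∑ j, (‖z j‖ ^ p + ‖z' j‖ ^ p) * ‖z m - z' m‖ := by
  have hmax : max ‖z‖ ‖z'‖ ^ p ≤ ∑ j, (‖z j‖ ^ p + ‖z' j‖ ^ p) := by
    rw [Real.rpow_max (norm_nonneg _) (norm_nonneg _) hp.le, Finset.sum_add_distrib]
    exact max_le
      ((pi_norm_rpow_le_sum_rpow z hp).trans (le_add_of_nonneg_right (by positivity)))
      ((pi_norm_rpow_le_sum_rpow z' hp).trans (le_add_of_nonneg_left (by positivity)))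
  have hsub : ‖z - z'‖ ≤ ∑ m, ‖z m - z' m‖ := by
    simpa using pi_norm_rpow_le_sum_rpow (z - z') one_pos
  rw [Finset.sum_comm, ← Finset.sum_mul_sum]
  gcongr

section MeanValue

variable {E G : Type*} [NormedAddCommGroup E] [NormedSpace ℝ E] [NormedAddCommGroup G]
  [NormedSpace ℝ G]

lemma norm_sub_le_of_norm_fderiv_le_of_mem_closedBall {g : E → G} (hg : Differentiable ℝ g)
    {R K : ℝ} (hK : ∀ x, ‖x‖ ≤ R → ‖fderiv ℝ g x‖ ≤ K) {x y : E} (hx : ‖x‖ ≤ R)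
    (hy : ‖y‖ ≤ R) : ‖g x - g y‖ ≤ K * ‖x - y‖ :=
  (convex_closedBall 0 R).norm_image_sub_le_of_norm_fderiv_le (fun u _ => hg u)
    (fun u hu => hK u (mem_closedBall_zero_iff.1 hu)) (mem_closedBall_zero_iff.2 hy)
    (mem_closedBall_zero_iff.2 hx)

lemma norm_le_of_norm_fderiv_le_add_rpow {g : E → G} (hg : Differentiable ℝ g) (hg0 : g 0 = 0)
    {a b q : ℝ} (hb : 0 ≤ b) (hq : 0 ≤ q) (hderiv : ∀ u, ‖fderiv ℝ g u‖ ≤ a + b * ‖u‖ ^ q)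
    {R : ℝ} {x : E} (hx : ‖x‖ ≤ R) : ‖g x‖ ≤ (a + b * R ^ q) * R := by
  have hK : ∀ u : E, ‖u‖ ≤ R → ‖fderiv ℝ g u‖ ≤ a + b * R ^ q := fun u hu =>
    (hderiv u).trans (by gcongr)
  have hK0 : 0 ≤ a + b * R ^ q := (norm_nonneg _).trans (hK x hx)
  calc ‖g x‖ = ‖g x - g 0‖ := by rw [hg0, sub_zero]
    _ ≤ (a + b * R ^ q) * ‖x - 0‖ :=
        norm_sub_le_of_norm_fderiv_le_of_mem_closedBall hg hK hx
          (by simpa using (norm_nonneg x).trans hx)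
    _ ≤ (a + b * R ^ q) * R := by rw [sub_zero]; gcongr

lemma abs_sub_le_of_homogeneous {φ : E → ℝ} {q A B : ℝ} (hq : 0 < q)
    (hφ : ∀ t : ℝ, 0 < t → ∀ x, φ (t • x) = t ^ (q + 2) * φ x)
    (h : ∀ x y, |φ x - φ y| ≤ (A + B * max ‖x‖ ‖y‖ ^ q) * max ‖x‖ ‖y‖ * ‖x - y‖) (x y : E) :
    |φ x - φ y| ≤ B * max ‖x‖ ‖y‖ ^ (q + 1) * ‖x - y‖ := by
  have hM : 0 ≤ max ‖x‖ ‖y‖ := (norm_nonneg x).trans (le_max_left _ _)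
  have hscaled : ∀ t : ℝ, 0 < t → |φ x - φ y| ≤
      B * max ‖x‖ ‖y‖ ^ (q + 1) * ‖x - y‖ + A * max ‖x‖ ‖y‖ * ‖x - y‖ * t ^ (-q) := by
    intro t ht
    have htq : 0 < t ^ (q + 2) := Real.rpow_pos_of_pos ht _
    have key := h (t • x) (t • y)
    rw [hφ t ht, hφ t ht, ← mul_sub, abs_mul, abs_of_pos htq, ← smul_sub, norm_smul, norm_smul,
      norm_smul, Real.norm_of_nonneg ht.le, ← mul_max_of_nonneg _ _ ht.le,
      Real.mul_rpow ht.le hM] at key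
    rw [← mul_le_mul_iff_right₀ htq]
    refine key.trans (le_of_eq ?_)
    rw [Real.rpow_add ht, Real.rpow_two, Real.rpow_add_one' hM (by linarith), Real.rpow_neg ht.le]
    field_simp
    ring
  have hlim : Filter.Tendsto (fun t : ℝ => B * max ‖x‖ ‖y‖ ^ (q + 1) * ‖x - y‖
      + A * max ‖x‖ ‖y‖ * ‖x - y‖ * t ^ (-q)) Filter.atTop
      (nhds (B * max ‖x‖ ‖y‖ ^ (q + 1) * ‖x - y‖ + A * max ‖x‖ ‖y‖ * ‖x - y‖ * 0)) :=
    ((tendsto_rpow_neg_atTop hq).const_mul _).const_add _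
  rw [mul_zero, add_zero] at hlim
  exact ge_of_tendsto hlim (Filter.eventually_gt_atTop 0 |>.mono hscaled)

end MeanValue

section Wirtinger

variable {l : ℕ}

/-- The Wirtinger coefficients of an `ℝ`-linear map; `wD g z m` is `wDLin (fderiv ℝ g z) m`
by definition. -/
noncomputable def wDLin (L : (Fin l → ℂ) →L[ℝ] ℂ) (m : Fin l) : ℂ :=
  (1 / 2 : ℂ) * (L (Pi.single m 1) - I * L (Pi.single m I))

noncomputable def wDbarLin (L : (Fin l → ℂ) →L[ℝ] ℂ) (m : Fin l) : ℂ :=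
  (1 / 2 : ℂ) * (L (Pi.single m 1) + I * L (Pi.single m I))

lemma wDLin_sub (L L' : (Fin l → ℂ) →L[ℝ] ℂ) (m : Fin l) :
    wDLin (L - L') m = wDLin L m - wDLin L' m := by
  simp only [wDLin, sub_apply]; ring

lemma wDbarLin_sub (L L' : (Fin l → ℂ) →L[ℝ] ℂ) (m : Fin l) :
    wDbarLin (L - L') m = wDbarLin L m - wDbarLin L' m := by
  simp only [wDbarLin, sub_apply]; ring

lemma apply_single_eq_wDLin (L : (Fin l → ℂ) →L[ℝ] ℂ) (k : Fin l) (c : ℂ) :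
    L (Pi.single k c) = wDLin L k * c + wDbarLin L k * conj c := by
  have hc : (Pi.single k c : Fin l → ℂ) =
      c.re • (Pi.single k 1 : Fin l → ℂ) + c.im • (Pi.single k I : Fin l → ℂ) := by
    rw [← Pi.single_smul, ← Pi.single_smul, ← Pi.single_add, real_smul, real_smul, mul_one,
      re_add_im]
  rw [hc, map_add, map_smul, map_smul, real_smul, real_smul, wDLin, wDbarLin]
  conv_rhs => rw [← re_add_im c]
  simp only [map_add, map_mul, conj_ofReal, conj_I]
  linear_combination (c.im * L (Pi.single k I)) * I_mul_I

lemma apply_eq_sum_wDLin (L : (Fin l → ℂ) →L[ℝ] ℂ) (v : Fin l → ℂ) :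
    L v = ∑ k, (wDLin L k * v k + wDbarLin L k * conj (v k)) := by
  conv_lhs => rw [← Finset.univ_sum_single v]
  simp only [map_sum, apply_single_eq_wDLin]

lemma norm_le_sum_wDLin (L : (Fin l → ℂ) →L[ℝ] ℂ) :
    ‖L‖ ≤ ∑ m, (‖wDLin L m‖ + ‖wDbarLin L m‖) := by
  refine L.opNorm_le_bound (by positivity) fun v => ?_
  rw [apply_eq_sum_wDLin, Finset.sum_mul]
  refine (norm_sum_le _ _).trans (Finset.sum_le_sum fun k _ => ?_)
  refine (norm_add_le _ _).trans ?_
  simp only [norm_mul, RCLike.norm_conj, add_mul]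
  gcongr <;> exact norm_le_pi_norm v k

/-- `wDbarLin L + conj (wDLin L)` is the gradient of `re ∘ L` for the real inner product
`re (∑ k, a k * conj (b k))`. -/
lemma re_apply_eq_sum (L : (Fin l → ℂ) →L[ℝ] ℂ) (v : Fin l → ℂ) :
    (L v).re = ∑ k, ((wDbarLin L k + conj (wDLin L k)) * conj (v k)).re := by
  rw [apply_eq_sum_wDLin, re_sum]
  refine Finset.sum_congr rfl fun k _ => ?_
  rw [add_mul, add_re, add_re, add_comm, ← map_mul, conj_re]

lemma abs_re_apply_le (L : (Fin l → ℂ) →L[ℝ] ℂ) (v : Fin l → ℂ) :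
    |(L v).re| ≤ (∑ k, ‖wDbarLin L k + conj (wDLin L k)‖) * ‖v‖ := by
  rw [re_apply_eq_sum, Finset.sum_mul]
  refine (Finset.abs_sum_le_sum_abs _ _).trans (Finset.sum_le_sum fun k _ => ?_)
  refine (abs_re_le_norm _).trans ?_
  rw [norm_mul, RCLike.norm_conj]
  gcongr
  exact norm_le_pi_norm v k

lemma norm_fderiv_sub_fderiv_le (g : (Fin l → ℂ) → ℂ) (z z' : Fin l → ℂ) :
    ‖fderiv ℝ g z - fderiv ℝ g z'‖ ≤
      ∑ m, (‖wD g z m - wD g z' m‖ + ‖wDbar g z m - wDbar g z' m‖) :=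
  (norm_le_sum_wDLin _).trans_eq (by simp only [wDLin_sub, wDbarLin_sub]; rfl)

lemma norm_fderiv_le_of_wirtinger_holder {g : (Fin l → ℂ) → ℂ} {C q : ℝ} (hC : 0 ≤ C)
    (hq : 0 ≤ q)
    (hg : ∀ z z' m, ‖wD g z m - wD g z' m‖ + ‖wDbar g z m - wDbar g z' m‖ ≤
      C * ∑ j, ‖z j - z' j‖ ^ q) (u : Fin l → ℂ) :
    ‖fderiv ℝ g u‖ ≤ ‖fderiv ℝ g 0‖ + l ^ 2 * C * ‖u‖ ^ q := by
  calc ‖fderiv ℝ g u‖ ≤ ‖fderiv ℝ g 0‖ + ‖fderiv ℝ g u - fderiv ℝ g 0‖ := norm_le_insert' _ _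
    _ ≤ ‖fderiv ℝ g 0‖ + ∑ _m : Fin l, C * ∑ j, ‖u j‖ ^ q := by
        gcongr
        refine (norm_fderiv_sub_fderiv_le g u 0).trans (Finset.sum_le_sum fun m _ => ?_)
        simpa using hg u 0 m
    _ ≤ ‖fderiv ℝ g 0‖ + l * C * (l * ‖u‖ ^ q) := by
        rw [Finset.sum_const, Finset.card_univ, Fintype.card_fin, nsmul_eq_mul, ← mul_assoc]
        gcongr
        simpa using sum_rpow_le_card_mul_pi_norm_rpow u hq
    _ = ‖fderiv ℝ g 0‖ + l ^ 2 * C * ‖u‖ ^ q := by ring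

lemma norm_fderiv_re_le {F : (Fin l → ℂ) → ℂ} {f : Fin l → (Fin l → ℂ) → ℂ} {x : Fin l → ℂ}
    (hF : DifferentiableAt ℝ F x) (hf : ∀ k, f k x = wDbar F x k + conj (wD F x k)) :
    ‖fderiv ℝ (fun w => (F w).re) x‖ ≤ ∑ k, ‖f k x‖ := by
  rw [show (fun w => (F w).re) = reCLM ∘ F from rfl,
    (reCLM.hasFDerivAt.comp x hF.hasFDerivAt).fderiv]
  refine ContinuousLinearMap.opNorm_le_bound _ (by positivity) fun v => ?_
  simp only [hf]
  exact abs_re_apply_le (fderiv ℝ F x) v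

lemma abs_re_sub_le_of_wirtinger_holder {F : (Fin l → ℂ) → ℂ} {f : Fin l → (Fin l → ℂ) → ℂ}
    {C q : ℝ} (hC : 0 ≤ C) (hq : 0 ≤ q) (hdiff : ∀ k, Differentiable ℝ (f k))
    (hf0 : ∀ k, f k 0 = 0)
    (hholder : ∀ z z' k m,
      ‖wD (f k) z m - wD (f k) z' m‖ + ‖wDbar (f k) z m - wDbar (f k) z' m‖ ≤
        C * ∑ j, ‖z j - z' j‖ ^ q)
    (hF : Differentiable ℝ F) (hgrad : ∀ z k, f k z = wDbar F z k + conj (wD F z k))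
    (z z' : Fin l → ℂ) :
    |(F z).re - (F z').re| ≤
      (∑ k, ‖fderiv ℝ (f k) 0‖ + l ^ 3 * C * max ‖z‖ ‖z'‖ ^ q) * max ‖z‖ ‖z'‖ * ‖z - z'‖ := by
  have hReF : ∀ R x, ‖x‖ ≤ R → ‖fderiv ℝ (fun w => (F w).re) x‖ ≤
      (∑ k, ‖fderiv ℝ (f k) 0‖ + l ^ 3 * C * R ^ q) * R := by
    intro R x hx
    calc _ ≤ ∑ k, ‖f k x‖ := norm_fderiv_re_le (hF x) (hgrad x)
      _ ≤ ∑ k, (‖fderiv ℝ (f k) 0‖ + l ^ 2 * C * R ^ q) * R :=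
          Finset.sum_le_sum fun k _ => norm_le_of_norm_fderiv_le_add_rpow (hdiff k) (hf0 k)
            (by positivity) hq (norm_fderiv_le_of_wirtinger_holder hC hq (hholder · · k)) hx
      _ = (∑ k, ‖fderiv ℝ (f k) 0‖ + l ^ 3 * C * R ^ q) * R := by
          rw [← Finset.sum_mul, Finset.sum_add_distrib, Finset.sum_const, Finset.card_univ,
            Fintype.card_fin, nsmul_eq_mul]
          ring
  exact norm_sub_le_of_norm_fderiv_le_of_mem_closedBall (reCLM.differentiable.comp hF) (hReF _)
    (le_max_left _ _) (le_max_right _ _)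

end Wirtinger

theorem statement4 (d l : ℕ) (hd : 3 ≤ d) (hl : 1 ≤ l)
    (f : Fin l → (Fin l → ℂ) → ℂ)
    (hdiff : ∀ k, Differentiable ℝ (f k))
    (hH1 : ∀ k, f k 0 = 0)
    (C : ℝ) (hC : 0 < C)
    (hH2 : ∀ (z z' : Fin l → ℂ) (k m : Fin l),
      ‖wD (f k) z m - wD (f k) z' m‖ +
        ‖wDbar (f k) z m - wDbar (f k) z' m‖ ≤
      C * ∑ j, ‖z j - z' j‖ ^ ((4 : ℝ) / ((d : ℝ) - 2)))
    (F : (Fin l → ℂ) → ℂ) (hF : Differentiable ℝ F)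
    (hH3 : ∀ (z : Fin l → ℂ) (k : Fin l),
      f k z = wDbar F z k + starRingEnd ℂ (wD F z k))
    (hH5 : ∀ lam : ℝ, 0 < lam → ∀ z : Fin l → ℂ,
      F (fun j => (lam : ℂ) * z j) =
        ((lam ^ ((2 * (d : ℝ)) / ((d : ℝ) - 2)) : ℝ) : ℂ) * F z) :
    ∃ C' > 0, ∀ z z' : Fin l → ℂ,
      |(F z).re - (F z').re| ≤
        C' * ∑ m, ∑ j,
          (‖z j‖ ^ (((d : ℝ) + 2) / ((d : ℝ) - 2)) +
            ‖z' j‖ ^ (((d : ℝ) + 2) / ((d : ℝ) - 2))) *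
            ‖z m - z' m‖ := by
  have hd2 : (0 : ℝ) < d - 2 := by
    have : (3 : ℝ) ≤ d := by exact_mod_cast hd
    linarith
  set q : ℝ := 4 / ((d : ℝ) - 2)
  have hq : 0 < q := by positivity
  have hr : 2 * (d : ℝ) / (d - 2) = q + 2 := by simp only [q]; field_simp; ring
  have hp : ((d : ℝ) + 2) / (d - 2) = q + 1 := by simp only [q]; field_simp; ring
  have hhom : ∀ t : ℝ, 0 < t → ∀ z, (F (t • z)).re = t ^ (q + 2) * (F z).re := by
    intro t ht z
    rw [← hr, ← re_ofReal_mul, ← hH5 t ht z]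
    simp only [Pi.smul_def, real_smul]
  refine ⟨l ^ 3 * C, mul_pos (pow_pos (by exact_mod_cast hl) 3) hC, fun z z' => ?_⟩
  calc |(F z).re - (F z').re| ≤ l ^ 3 * C * max ‖z‖ ‖z'‖ ^ (q + 1) * ‖z - z'‖ :=
        abs_sub_le_of_homogeneous (φ := fun w => (F w).re) hq hhom
          (abs_re_sub_le_of_wirtinger_holder hC.le hq.le hdiff hH1 hH2 hF hH3) z z'
    _ ≤ _ := by
        rw [hp, mul_assoc]
        gcongr
        exact max_norm_rpow_mul_norm_sub_le z z' (by positivity)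
end

section
/- Let d ≥ 3 and l ≥ 1. Suppose f_1,…,f_l : ℂ^l → ℂ and F : ℂ^l → ℂ is real-differentiable satisfying (H3) and (H5). Then for every z ∈ ℂ^l the Euler-type identity holds: Re Σ_{k=1}^l f_k(z) · conj(z_k) = (2d/(d−2)) · Re F(z). -/
/-!
Differentiating the homogeneity relation `F (t • z) = t ^ p • F z` at `t = 1` gives Euler's
identity `dF_z(z) = p F(z)`. In Wirtinger derivatives, `dF_z(z) = Σ_k (∂F/∂z_k z_k + ∂F/∂z̄_k z̄_k)`,
and since `Re (conj a * conj b) = Re (a * b)` the real part of this sum is `Re Σ_k f_k(z) z̄_k`.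
-/

open Complex Finset

open scoped ComplexConjugate

theorem realLinearMap_complex_apply (L : ℂ →ₗ[ℝ] ℂ) (w : ℂ) :
    L w = (1 / 2 : ℂ) * (L 1 - I * L I) * w + (1 / 2 : ℂ) * (L 1 + I * L I) * conj w := by
  have hw : w = w.re • (1 : ℂ) + w.im • I := by simp [Complex.real_smul, re_add_im]
  conv_lhs => rw [hw, map_add, map_smul, map_smul]
  conv_rhs => rw [← re_add_im w]
  simp only [Complex.real_smul, map_add, map_mul, conj_ofReal, conj_I]
  ring_nf
  rw [I_sq]
  ring

theorem fderiv_apply_eq_sum_wirtinger {l : ℕ} (F : (Fin l → ℂ) → ℂ) (z w : Fin l → ℂ) :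
    fderiv ℝ F z w = ∑ k, (wD F z k * w k + wDbar F z k * conj (w k)) := by
  conv_lhs => rw [← Finset.univ_sum_single w, map_sum]
  refine Finset.sum_congr rfl fun k _ => ?_
  exact realLinearMap_complex_apply
    ((fderiv ℝ F z).toLinearMap.comp (LinearMap.single ℝ (fun _ => ℂ) k)) (w k)

theorem fderiv_apply_self_of_homogeneous {E G : Type*} [NormedAddCommGroup E] [NormedSpace ℝ E]
    [NormedAddCommGroup G] [NormedSpace ℝ G] {F : E → G} {x : E} (p : ℝ)
    (hF : DifferentiableAt ℝ F x) (hom : ∀ t : ℝ, 0 < t → F (t • x) = t ^ p • F x) :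
    fderiv ℝ F x x = p • F x := by
  have hchain : HasDerivAt (fun t : ℝ => F (t • x)) (fderiv ℝ F x x) 1 := by
    have hray : HasDerivAt (fun t : ℝ => t • x) x 1 := by
      simpa using (hasDerivAt_id (1 : ℝ)).smul_const x
    have hF' : HasFDerivAt F (fderiv ℝ F x) ((1 : ℝ) • x) := by simpa using hF.hasFDerivAt
    exact hF'.comp_hasDerivAt 1 hray
  have hpow : HasDerivAt (fun t : ℝ => F (t • x)) (p • F x) 1 := by
    have hrpow : HasDerivAt (fun t : ℝ => t ^ p • F x) (p • F x) 1 := by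
      simpa using (Real.hasDerivAt_rpow_const (p := p) (Or.inl one_ne_zero)).smul_const (F x)
    refine hrpow.congr_of_eventuallyEq ?_
    filter_upwards [eventually_gt_nhds one_pos] with t ht using hom t ht
  exact hchain.unique hpow

theorem re_sum_mul_conj_eq_re_fderiv {l : ℕ} (F : (Fin l → ℂ) → ℂ) (z : Fin l → ℂ) :
    (∑ k, (wDbar F z k + conj (wD F z k)) * conj (z k)).re = (fderiv ℝ F z z).re := by
  rw [fderiv_apply_eq_sum_wirtinger, re_sum, re_sum]
  refine Finset.sum_congr rfl fun k _ => ?_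
  rw [add_mul, ← map_mul, add_re, add_re, conj_re, add_comm]

theorem statement6_general (d l : ℕ)
    (f : Fin l → (Fin l → ℂ) → ℂ)
    (F : (Fin l → ℂ) → ℂ) (hF : Differentiable ℝ F)
    (hH3 : ∀ (z : Fin l → ℂ) (k : Fin l),
      f k z = wDbar F z k + starRingEnd ℂ (wD F z k))
    (hH5 : ∀ lam : ℝ, 0 < lam → ∀ z : Fin l → ℂ,
      F (fun j => (lam : ℂ) * z j) =
        ((lam ^ ((2 * (d : ℝ)) / ((d : ℝ) - 2)) : ℝ) : ℂ) * F z) :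
    ∀ z : Fin l → ℂ,
      (∑ k, f k z * starRingEnd ℂ (z k)).re =
        (2 * (d : ℝ) / ((d : ℝ) - 2)) * (F z).re := by
  intro z
  have hEuler := fderiv_apply_self_of_homogeneous (x := z) (2 * (d : ℝ) / ((d : ℝ) - 2)) (hF z)
    fun t ht => by rw [Complex.real_smul, ← hH5 t ht z]; rfl
  simp_rw [hH3, re_sum_mul_conj_eq_re_fderiv, hEuler, Complex.real_smul, re_ofReal_mul]

theorem statement6 (d l : ℕ) (hd : 3 ≤ d) (hl : 1 ≤ l)
    (f : Fin l → (Fin l → ℂ) → ℂ)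
    (F : (Fin l → ℂ) → ℂ) (hF : Differentiable ℝ F)
    (hH3 : ∀ (z : Fin l → ℂ) (k : Fin l),
      f k z = wDbar F z k + starRingEnd ℂ (wD F z k))
    (hH5 : ∀ lam : ℝ, 0 < lam → ∀ z : Fin l → ℂ,
      F (fun j => (lam : ℂ) * z j) =
        ((lam ^ ((2 * (d : ℝ)) / ((d : ℝ) - 2)) : ℝ) : ℂ) * F z) :
    ∀ z : Fin l → ℂ,
      (∑ k, f k z * starRingEnd ℂ (z k)).re =
        (2 * (d : ℝ) / ((d : ℝ) - 2)) * (F z).re :=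
  statement6_general d l f F hF hH3 hH5
end

section
/- Let d ≥ 1 and l ≥ 1. Suppose f_1,…,f_l : ℂ^l → ℂ and F : ℂ^l → ℂ is real-differentiable satisfying (H3). Let u = (u_1,…,u_l) with each u_k : ℝ^d → ℂ differentiable at a point x ∈ ℝ^d. Then for every direction h ∈ ℝ^d, Re Σ_{k=1}^l f_k(u(x)) · conj(Du_k(x)h) = Re [ D(F∘u)(x)h ], where D denotes the Fréchet derivative over ℝ; that is, Re Σ_k f_k(u)·∇ū_k = Re ∇[F(u)] pointwise. -/
open Complex Finset

lemma key_re (A B w : ℂ) :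
    (((1 / 2 : ℂ) * (A + Complex.I * B) +
        starRingEnd ℂ ((1 / 2 : ℂ) * (A - Complex.I * B))) * starRingEnd ℂ w).re =
      w.re * A.re + w.im * B.re := by
  simp [Complex.mul_re, Complex.mul_im, Complex.add_re, Complex.add_im, Complex.sub_re,
    Complex.sub_im, Complex.conj_re, Complex.conj_im, Complex.I_re, Complex.I_im,
    Complex.div_re, Complex.div_im, Complex.normSq, Complex.one_re, Complex.one_im]
  ring

lemma single_decomp {l : ℕ} (k : Fin l) (w : ℂ) :
    (Pi.single k w : Fin l → ℂ) =
      w.re • (Pi.single k (1 : ℂ) : Fin l → ℂ) +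
        w.im • (Pi.single k Complex.I : Fin l → ℂ) := by
  have : w = w.re • (1 : ℂ) + w.im • Complex.I := by
    rw [Complex.ext_iff]; simp
  rw [← Pi.single_smul, ← Pi.single_smul, ← Pi.single_add, ← this]

theorem statement7 (d l : ℕ) (hd : 1 ≤ d) (hl : 1 ≤ l)
    (f : Fin l → (Fin l → ℂ) → ℂ)
    (F : (Fin l → ℂ) → ℂ) (hF : Differentiable ℝ F)
    (hH3 : ∀ (z : Fin l → ℂ) (k : Fin l),
      f k z = wDbar F z k + starRingEnd ℂ (wD F z k))
    (u : Fin l → EuclideanSpace ℝ (Fin d) → ℂ)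
    (x : EuclideanSpace ℝ (Fin d))
    (hu : ∀ k, DifferentiableAt ℝ (u k) x) :
    ∀ h : EuclideanSpace ℝ (Fin d),
      (∑ k, f k (fun j => u j x) * starRingEnd ℂ ((fderiv ℝ (u k) x) h)).re =
        ((fderiv ℝ (fun y => F (fun j => u j y)) x) h).re := by
  intro h
  have hU : DifferentiableAt ℝ (fun y (j : Fin l) => u j y) x := differentiableAt_pi.2 hu
  have hchain : fderiv ℝ (fun y => F (fun j => u j y)) x =
      (fderiv ℝ F (fun j => u j x)).comp (fderiv ℝ (fun y (j : Fin l) => u j y) x) :=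
    fderiv_comp x (hF _) hU
  have hpi : (fderiv ℝ (fun y (j : Fin l) => u j y) x) h =
      fun k => (fderiv ℝ (u k) x) h := by
    rw [fderiv_pi hu]; rfl
  have hRHS : ((fderiv ℝ (fun y => F (fun j => u j y)) x) h).re =
      ∑ k, ((fderiv ℝ F (fun j => u j x)) (Pi.single k ((fderiv ℝ (u k) x) h))).re := by
    rw [hchain]
    simp only [ContinuousLinearMap.comp_apply, hpi]
    conv_lhs => rw [← Finset.univ_sum_single (fun k => (fderiv ℝ (u k) x) h)]
    rw [map_sum (fderiv ℝ F (fun j => u j x))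
      (fun k => (Pi.single k ((fderiv ℝ (u k) x) h) : Fin l → ℂ)) Finset.univ]
    exact Complex.re_sum Finset.univ _
  rw [hRHS, Complex.re_sum]
  refine Finset.sum_congr rfl fun k _ => ?_
  rw [hH3, wD, wDbar, key_re, single_decomp k ((fderiv ℝ (u k) x) h), map_add, map_smul,
    map_smul, Complex.add_re, Complex.smul_re, Complex.smul_re, smul_eq_mul, smul_eq_mul]
end

section
/- Let l ≥ 1. Suppose f_1,…,f_l : ℂ^l → ℂ and F : ℂ^l → ℂ is real-differentiable satisfying (H3), and suppose (H4) holds with positive constants σ_1,…,σ_l. Then for every θ ∈ ℝ and every z = (z_1,…,z_l) ∈ ℂ^l, Re F(e^{iσ_1θ/2} z_1, …, e^{iσ_lθ/2} z_l) = Re F(z_1,…,z_l). -/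
open Complex Finset

/-
Rotating the coordinates by `z_k ↦ e^{i c_k t} z_k` moves `z` along the vector field
`(i c_k z_k)_k`, and `Re dF_z (i c_k z_k)_k = Im Σ c_k (∂̄_k F + conj ∂_k F) conj z_k`.
With `c_k = σ_k / 2` this is `½ Im Σ σ_k f_k conj z_k = 0` by (H3) and (H4), so `Re F` is
constant along each rotation orbit.
-/

open ComplexConjugate

/- On the `k`-th coordinate `L` acts as `w ↦ a w + b conj w` with `a = ∂_k L`, `b = ∂̄_k L`,
so `Re L(i w) = Im (i a w - i b conj w) = Im ((b + conj a) conj w)`. -/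
theorem re_apply_single_I_mul {ι : Type*} [DecidableEq ι] (L : (ι → ℂ) →L[ℝ] ℂ) (k : ι) (w : ℂ) :
    (L (Pi.single k (I * w))).re =
      (((1 / 2 : ℂ) * (L (Pi.single k 1) + I * L (Pi.single k I)) +
        conj ((1 / 2 : ℂ) * (L (Pi.single k 1) - I * L (Pi.single k I)))) * conj w).im := by
  have hsplit : (Pi.single k (I * w) : ι → ℂ) =
      w.re • (Pi.single k I : ι → ℂ) - w.im • (Pi.single k 1 : ι → ℂ) := by
    rw [← Pi.single_smul, ← Pi.single_smul, ← Pi.single_sub]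
    congr 1
    apply Complex.ext <;> simp [Complex.real_smul]
  rw [hsplit, map_sub, map_smul, map_smul]
  simp only [Complex.real_smul, Complex.mul_im, Complex.mul_re, Complex.add_re, Complex.add_im,
    Complex.sub_re, Complex.sub_im, Complex.conj_re, Complex.conj_im, Complex.I_re, Complex.I_im]
  norm_num
  ring

theorem re_fderiv_apply_I_mul {l : ℕ} (F : (Fin l → ℂ) → ℂ) (z : Fin l → ℂ)
    (c : Fin l → ℝ) :
    (fderiv ℝ F z (fun k => I * c k * z k)).re =
      (∑ k, (c k : ℂ) * ((wDbar F z k + conj (wD F z k)) * conj (z k))).im := by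
  set L := fderiv ℝ F z
  have hcoord : ∀ k, (L (Pi.single k (I * c k * z k))).re =
      ((c k : ℂ) * ((wDbar F z k + conj (wD F z k)) * conj (z k))).im := by
    intro k
    rw [mul_comm I, mul_assoc, ← Complex.real_smul, Pi.single_smul, map_smul,
      Complex.real_smul, Complex.re_ofReal_mul, Complex.im_ofReal_mul]
    exact congrArg _ (re_apply_single_I_mul L k (z k))
  conv_lhs => rw [← Finset.univ_sum_single (fun k => I * c k * z k), map_sum]
  rw [Complex.re_sum, Complex.im_sum]
  exact Finset.sum_congr rfl fun k _ => hcoord k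

section Rotation

variable {ι : Type*}

noncomputable def rotate (c : ι → ℝ) (t : ℝ) (z : ι → ℂ) : ι → ℂ :=
  fun k => exp (I * ((c k * t : ℝ) : ℂ)) * z k

@[simp]
theorem rotate_zero (c : ι → ℝ) (z : ι → ℂ) : rotate c 0 z = z := by
  ext k
  simp [rotate]

theorem hasDerivAt_rotate [Fintype ι] (c : ι → ℝ) (z : ι → ℂ) (t : ℝ) :
    HasDerivAt (fun t => rotate c t z) (fun k => I * c k * rotate c t z k) t := by
  rw [hasDerivAt_pi]
  intro k
  have hphase : HasDerivAt (fun s : ℝ => I * ((c k * s : ℝ) : ℂ)) (I * c k) t := by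
    simpa [mul_assoc] using ((Complex.ofRealCLM.hasDerivAt (x := t)).const_mul (I * c k))
  exact (hphase.cexp.mul_const (z k)).congr_deriv (by simp only [rotate]; ring)

theorem re_rotate_eq_of_re_fderiv_eq_zero [Fintype ι] {F : (ι → ℂ) → ℂ} (hF : Differentiable ℝ F)
    {c : ι → ℝ} (hgen : ∀ z, (fderiv ℝ F z (fun k => I * c k * z k)).re = 0)
    (t : ℝ) (z : ι → ℂ) : (F (rotate c t z)).re = (F z).re := by
  have hderiv : ∀ s, HasDerivAt (fun s => (F (rotate c s z)).re) 0 s := by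
    intro s
    have h := Complex.reCLM.hasFDerivAt.comp_hasDerivAt s
      ((hF _).hasFDerivAt.comp_hasDerivAt s (hasDerivAt_rotate c z s))
    rw [Complex.reCLM_apply, hgen] at h
    exact h
  have hconst := is_const_of_deriv_eq_zero (fun s => (hderiv s).differentiableAt)
    (fun s => (hderiv s).deriv) t 0
  rwa [rotate_zero] at hconst

end Rotation

theorem statement10_general (l : ℕ)
    (f : Fin l → (Fin l → ℂ) → ℂ)
    (F : (Fin l → ℂ) → ℂ) (hF : Differentiable ℝ F)
    (hH3 : ∀ (z : Fin l → ℂ) (k : Fin l),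
      f k z = wDbar F z k + starRingEnd ℂ (wD F z k))
    (σ : Fin l → ℝ)
    (hH4 : ∀ z : Fin l → ℂ,
      (∑ k, (σ k : ℂ) * (f k z * starRingEnd ℂ (z k))).im = 0) :
    ∀ (θ : ℝ) (z : Fin l → ℂ),
      (F (fun k => Complex.exp (Complex.I * ((σ k * θ / 2 : ℝ) : ℂ)) * z k)).re =
        (F z).re := by
  intro θ z
  have hgen : ∀ w, (fderiv ℝ F w (fun k => I * (σ k / 2 : ℝ) * w k)).re = 0 := by
    intro w
    rw [re_fderiv_apply_I_mul]
    simp_rw [← hH3, Complex.ofReal_div, div_mul_eq_mul_div, ← Finset.sum_div]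
    rw [Complex.div_ofReal_im, hH4, zero_div]
  have hrot : rotate (fun k => σ k / 2) θ z =
      fun k => exp (I * ((σ k * θ / 2 : ℝ) : ℂ)) * z k := by
    ext k
    simp only [rotate, div_mul_eq_mul_div]
  rw [← hrot]
  exact re_rotate_eq_of_re_fderiv_eq_zero hF hgen θ z

theorem statement10 (l : ℕ) (hl : 1 ≤ l)
    (f : Fin l → (Fin l → ℂ) → ℂ)
    (F : (Fin l → ℂ) → ℂ) (hF : Differentiable ℝ F)
    (hH3 : ∀ (z : Fin l → ℂ) (k : Fin l),
      f k z = wDbar F z k + starRingEnd ℂ (wD F z k))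
    (σ : Fin l → ℝ) (hσ : ∀ k, 0 < σ k)
    (hH4 : ∀ z : Fin l → ℂ,
      (∑ k, (σ k : ℂ) * (f k z * starRingEnd ℂ (z k))).im = 0) :
    ∀ (θ : ℝ) (z : Fin l → ℂ),
      (F (fun k => Complex.exp (Complex.I * ((σ k * θ / 2 : ℝ) : ℂ)) * z k)).re =
        (F z).re :=
  statement10_general l f F hF hH3 σ hH4
end

section
/- Let l ≥ 1. Suppose f_1,…,f_l : ℂ^l → ℂ and F : ℂ^l → ℂ is real-differentiable satisfying (H3), and suppose (H4) holds with positive constants σ_1,…,σ_l. Then the nonlinearities satisfy the gauge condition: for every θ ∈ ℝ, every z ∈ ℂ^l and every k ∈ {1,…,l}, f_k(e^{iσ_1θ/2} z_1, …, e^{iσ_lθ/2} z_l) = e^{iσ_kθ/2} f_k(z_1,…,z_l). -/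
/-!
Put `G = F + conj F = 2 Re F`. By (H3), `∂G/∂z̄_k = f_k`, and since `G` is real valued,
`dG_z(v) = 2 Re Σ_j f_j(z) conj(v_j)`. Along the gauge flow `z_m ↦ e^{iσ_m t} z_m`, whose velocity
is `v_m = iσ_m z_m`, this is `2 Im Σ_j σ_j f_j(z) conj(z_j)`, which vanishes by (H4); so `G` is
gauge invariant. Applying `∂/∂z̄_k` to the identity `G(c z) = G(z)` with `|c_k| = 1` gives
`f_k(c z) = c_k f_k(z)`.
-/

open Complex Finset

open ComplexConjugate

section Wirtinger

variable {l : ℕ}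

theorem fderiv_apply_single (F : (Fin l → ℂ) → ℂ) (z : Fin l → ℂ) (k : Fin l) (v : ℂ) :
    fderiv ℝ F z (Pi.single k v) = wD F z k * v + wDbar F z k * conj v := by
  have hv : (Pi.single k v : Fin l → ℂ) =
      v.re • (Pi.single k 1 : Fin l → ℂ) + v.im • (Pi.single k I : Fin l → ℂ) := by
    rw [← Pi.single_smul, ← Pi.single_smul, ← Pi.single_add, real_smul, real_smul, mul_one,
      re_add_im]
  have hconj : conj v = v.re - v.im * I := by
    apply Complex.ext <;> simp
  rw [hv, map_add, map_smul, map_smul, real_smul, real_smul, wD, wDbar]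
  set P := fderiv ℝ F z (Pi.single k 1)
  set Q := fderiv ℝ F z (Pi.single k I)
  linear_combination (1 / 2 : ℂ) * (P - I * Q) * re_add_im v - (1 / 2 : ℂ) * (P + I * Q) * hconj
    + (v.im : ℂ) * Q * I_mul_I

theorem fderiv_apply_eq_sum (F : (Fin l → ℂ) → ℂ) (z v : Fin l → ℂ) :
    fderiv ℝ F z v = ∑ j, (wD F z j * v j + wDbar F z j * conj (v j)) := by
  conv_lhs => rw [← Finset.univ_sum_single v]
  simp only [map_sum, fderiv_apply_single]

theorem wD_eq_of_fderiv_apply_single {F : (Fin l → ℂ) → ℂ} {z : Fin l → ℂ} {k : Fin l} {a b : ℂ}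
    (h : ∀ v, fderiv ℝ F z (Pi.single k v) = a * v + b * conj v) : wD F z k = a := by
  rw [wD, h, h, map_one, conj_I]
  linear_combination (-(1 / 2 : ℂ) * a + (1 / 2 : ℂ) * b) * I_mul_I

theorem wDbar_eq_of_fderiv_apply_single {F : (Fin l → ℂ) → ℂ} {z : Fin l → ℂ} {k : Fin l}
    {a b : ℂ} (h : ∀ v, fderiv ℝ F z (Pi.single k v) = a * v + b * conj v) :
    wDbar F z k = b := by
  rw [wDbar, h, h, map_one, conj_I]
  linear_combination ((1 / 2 : ℂ) * a - (1 / 2 : ℂ) * b) * I_mul_I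

theorem fderiv_conj_apply (F : (Fin l → ℂ) → ℂ) (z u : Fin l → ℂ) :
    fderiv ℝ (fun w => conj (F w)) z u = conj (fderiv ℝ F z u) :=
  show fderiv ℝ (fun w => star (F w)) z u = star (fderiv ℝ F z u) by rw [fderiv_star]; rfl

theorem wD_conj (F : (Fin l → ℂ) → ℂ) (z : Fin l → ℂ) (k : Fin l) :
    wD (fun w => conj (F w)) z k = conj (wDbar F z k) :=
  wD_eq_of_fderiv_apply_single fun v => by
    rw [fderiv_conj_apply, fderiv_apply_single, map_add, map_mul, map_mul, conj_conj, add_comm]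

theorem wDbar_conj (F : (Fin l → ℂ) → ℂ) (z : Fin l → ℂ) (k : Fin l) :
    wDbar (fun w => conj (F w)) z k = conj (wD F z k) :=
  wDbar_eq_of_fderiv_apply_single fun v => by
    rw [fderiv_conj_apply, fderiv_apply_single, map_add, map_mul, map_mul, conj_conj, add_comm]

theorem wDbar_add {F G : (Fin l → ℂ) → ℂ} {z : Fin l → ℂ} (hF : DifferentiableAt ℝ F z)
    (hG : DifferentiableAt ℝ G z) (k : Fin l) :
    wDbar (fun w => F w + G w) z k = wDbar F z k + wDbar G z k :=
  wDbar_eq_of_fderiv_apply_single (a := wD F z k + wD G z k) fun v => by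
    rw [fderiv_fun_add hF hG, add_apply, fderiv_apply_single, fderiv_apply_single]
    ring

theorem wD_eq_conj_wDbar_of_conj_eq {G : (Fin l → ℂ) → ℂ} (hG : ∀ w, conj (G w) = G w)
    (z : Fin l → ℂ) (k : Fin l) : wD G z k = conj (wDbar G z k) := by
  rw [← wD_conj, funext hG]

theorem fderiv_apply_of_conj_eq {G : (Fin l → ℂ) → ℂ} (hG : ∀ w, conj (G w) = G w)
    (z v : Fin l → ℂ) :
    fderiv ℝ G z v = (2 * (∑ j, wDbar G z j * conj (v j)).re : ℝ) := by
  rw [fderiv_apply_eq_sum, ← add_conj, map_sum, ← Finset.sum_add_distrib]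
  refine Finset.sum_congr rfl fun j _ => ?_
  rw [wD_eq_conj_wDbar_of_conj_eq hG, map_mul, conj_conj, add_comm]

theorem wDbar_comp_mul {G : (Fin l → ℂ) → ℂ} (c z : Fin l → ℂ)
    (hG : DifferentiableAt ℝ G (c * z)) (k : Fin l) :
    wDbar (fun w => G (c * w)) z k = conj (c k) * wDbar G (c * z) k := by
  let D : (Fin l → ℂ) →L[ℝ] (Fin l → ℂ) := ContinuousLinearMap.pi fun m => c m • .proj m
  have hD : ∀ w, D w = c * w := fun w => rfl
  have hfd : fderiv ℝ (fun w => G (c * w)) z = (fderiv ℝ G (c * z)).comp D :=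
    (hG.hasFDerivAt.comp z D.hasFDerivAt).fderiv
  refine wDbar_eq_of_fderiv_apply_single (a := wD G (c * z) k * c k) fun v => ?_
  rw [hfd, ContinuousLinearMap.comp_apply, hD, ← Pi.single_mul_right, fderiv_apply_single,
    map_mul]
  ring

theorem wDbar_mul_eq_of_invariant {G : (Fin l → ℂ) → ℂ} (c z : Fin l → ℂ)
    (hG : DifferentiableAt ℝ G (c * z)) (hinv : ∀ w, G (c * w) = G w) (k : Fin l)
    (hc : ‖c k‖ = 1) : wDbar G (c * z) k = c k * wDbar G z k := by
  have hcc : c k * conj (c k) = 1 := by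
    rw [RCLike.mul_conj, hc]; norm_num
  have h := wDbar_comp_mul c z hG k
  rw [funext hinv] at h
  rw [h, ← mul_assoc, hcc, one_mul]

end Wirtinger

section Gauge

variable {ι : Type*} (σ : ι → ℝ)

noncomputable def gaugePhase (t : ℝ) : ι → ℂ := fun m => exp (I * ((σ m * t : ℝ) : ℂ))

theorem gaugePhase_zero : gaugePhase σ 0 = 1 := by
  ext m; simp [gaugePhase]

theorem norm_gaugePhase (t : ℝ) (m : ι) : ‖gaugePhase σ t m‖ = 1 := by
  rw [gaugePhase, mul_comm]; exact norm_exp_ofReal_mul_I _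

theorem hasDerivAt_gaugePhase_mul (z : ι → ℂ) (t : ℝ) :
    HasDerivAt (fun t => gaugePhase σ t * z) (fun m => I * σ m * (gaugePhase σ t * z) m) t := by
  refine hasDerivAt_pi.mpr fun m => ?_
  have hphase : HasDerivAt (fun t : ℝ => ((σ m * t : ℝ) : ℂ)) (σ m) t := by
    simpa using ((hasDerivAt_id t).const_mul (σ m)).ofReal_comp
  refine (((hphase.const_mul I).cexp).mul_const (z m)).congr_deriv ?_
  change _ = I * σ m * (exp (I * ((σ m * t : ℝ) : ℂ)) * z m)
  ring

end Gauge

theorem apply_gaugePhase_mul_eq {l : ℕ} {G : (Fin l → ℂ) → ℂ} (hG : Differentiable ℝ G)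
    (hG_real : ∀ w, conj (G w) = G w) (σ : Fin l → ℝ)
    (hσ : ∀ w, (∑ k, (σ k : ℂ) * (wDbar G w k * conj (w k))).im = 0) (t : ℝ) (z : Fin l → ℂ) :
    G (gaugePhase σ t * z) = G z := by
  have hflow : ∀ t, HasDerivAt (fun t => G (gaugePhase σ t * z)) 0 t := by
    intro t
    refine ((hG _).hasFDerivAt.comp_hasDerivAt t (hasDerivAt_gaugePhase_mul σ z t)).congr_deriv ?_
    set w := gaugePhase σ t * z
    have hsum : ∑ j, wDbar G w j * conj (I * σ j * w j) =
        -(I * ∑ j, (σ j : ℂ) * (wDbar G w j * conj (w j))) := by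
      rw [Finset.mul_sum, ← Finset.sum_neg_distrib]
      refine Finset.sum_congr rfl fun j _ => ?_
      rw [map_mul, map_mul, conj_I, conj_ofReal]
      ring
    rw [fderiv_apply_of_conj_eq hG_real, hsum, neg_re, I_mul_re, hσ]
    simp
  simpa [gaugePhase_zero] using
    is_const_of_deriv_eq_zero (fun t => (hflow t).differentiableAt) (fun t => (hflow t).deriv) t 0

theorem statement11_general (l : ℕ)
    (f : Fin l → (Fin l → ℂ) → ℂ)
    (F : (Fin l → ℂ) → ℂ) (hF : Differentiable ℝ F)
    (hH3 : ∀ (z : Fin l → ℂ) (k : Fin l),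
      f k z = wDbar F z k + starRingEnd ℂ (wD F z k))
    (σ : Fin l → ℝ)
    (hH4 : ∀ z : Fin l → ℂ,
      (∑ k, (σ k : ℂ) * (f k z * starRingEnd ℂ (z k))).im = 0) :
    ∀ (θ : ℝ) (z : Fin l → ℂ) (k : Fin l),
      f k (fun m => Complex.exp (Complex.I * ((σ m * θ / 2 : ℝ) : ℂ)) * z m) =
        Complex.exp (Complex.I * ((σ k * θ / 2 : ℝ) : ℂ)) * f k z := by
  intro θ z k
  let G : (Fin l → ℂ) → ℂ := fun w => F w + conj (F w)
  have hFc : Differentiable ℝ fun w => conj (F w) := hF.star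
  have hG : Differentiable ℝ G := hF.add hFc
  have hG_real : ∀ w, conj (G w) = G w := fun w => by
    simp only [G, map_add, conj_conj, add_comm]
  have hG_wDbar : ∀ w k, wDbar G w k = f k w := fun w k => by
    rw [wDbar_add (hF w) (hFc w), wDbar_conj, hH3]
  have hG_inv : ∀ w, G (gaugePhase σ (θ / 2) * w) = G w :=
    apply_gaugePhase_mul_eq hG hG_real σ (by simpa only [hG_wDbar] using hH4) (θ / 2)
  have hphase : ∀ m, exp (I * ((σ m * θ / 2 : ℝ) : ℂ)) = gaugePhase σ (θ / 2) m := fun m => by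
    rw [gaugePhase, mul_div_assoc]
  have h := wDbar_mul_eq_of_invariant _ z (hG _) hG_inv k (norm_gaugePhase σ _ k)
  rw [hG_wDbar, hG_wDbar] at h
  simp only [hphase]
  exact h

theorem statement11 (l : ℕ) (hl : 1 ≤ l)
    (f : Fin l → (Fin l → ℂ) → ℂ)
    (F : (Fin l → ℂ) → ℂ) (hF : Differentiable ℝ F)
    (hH3 : ∀ (z : Fin l → ℂ) (k : Fin l),
      f k z = wDbar F z k + starRingEnd ℂ (wD F z k))
    (σ : Fin l → ℝ) (hσ : ∀ k, 0 < σ k)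
    (hH4 : ∀ z : Fin l → ℂ,
      (∑ k, (σ k : ℂ) * (f k z * starRingEnd ℂ (z k))).im = 0) :
    ∀ (θ : ℝ) (z : Fin l → ℂ) (k : Fin l),
      f k (fun m => Complex.exp (Complex.I * ((σ m * θ / 2 : ℝ) : ℂ)) * z m) =
        Complex.exp (Complex.I * ((σ k * θ / 2 : ℝ) : ℂ)) * f k z :=
  statement11_general l f F hF hH3 σ hH4
end

section
/- Let I ⊂ ℝ be an open interval with 0 ∈ I, let a ∈ ℝ, b > 0 and q > 1. Define γ = (bq)^{−1/(q−1)} and f(r) = a − r + b r^q for r > 0. Let G : I → ℝ be a nonnegative continuous function such that f(G(t)) ≥ 0 for all t ∈ I. Assume a < (1−δ)(1 − 1/q)γ for some δ ∈ (0,1). Then: (i) if G(0) < γ, there exists δ₁ > 0 (depending only on δ, b, q) such that G(t) < (1−δ₁)γ for all t ∈ I; (ii) if G(0) > γ, there exists δ₂ > 0 (depending only on δ, b, q) such that G(t) > (1+δ₂)γ for all t ∈ I. -/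
theorem statement13 (I : Set ℝ) (hIopen : IsOpen I) (hIconn : I.OrdConnected)
    (hI0 : (0 : ℝ) ∈ I)
    (a b q δ : ℝ) (hb : 0 < b) (hq : 1 < q) (hδ : 0 < δ) (hδ1 : δ < 1)
    (γ : ℝ) (hγ : γ = (b * q) ^ (-(1 / (q - 1))))
    (G : ℝ → ℝ) (hGcont : ContinuousOn G I) (hGnonneg : ∀ t ∈ I, 0 ≤ G t)
    (hfG : ∀ t ∈ I, 0 ≤ a - G t + b * G t ^ q)
    (ha : a < (1 - δ) * (1 - 1 / q) * γ) :
    (G 0 < γ → ∃ δ₁ > 0, ∀ t ∈ I, G t < (1 - δ₁) * γ) ∧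
    (G 0 > γ → ∃ δ₂ > 0, ∀ t ∈ I, G t > (1 + δ₂) * γ) := by
  have hq0 : (0:ℝ) < q := lt_trans one_pos hq
  have hq1 : q - 1 ≠ 0 := by nlinarith
  have hbq : 0 < b * q := mul_pos hb hq0
  have hγpos : 0 < γ := by rw [hγ]; exact Real.rpow_pos_of_pos hbq _
  -- compute b * γ ^ (q - 1) = 1 / q
  have hγq1 : b * γ ^ (q - 1) = 1 / q := by
    rw [hγ, ← Real.rpow_mul hbq.le]
    rw [show -(1 / (q - 1)) * (q - 1) = -1 by field_simp]
    rw [Real.rpow_neg_one]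
    field_simp
  have hγq : b * γ ^ q = 1 / q * γ := by
    have h : γ ^ q = γ ^ (q - 1) * γ := by
      rw [← Real.rpow_add_one hγpos.ne' (q - 1)]; ring_nf
    rw [h, ← mul_assoc, hγq1]
  -- value at the max
  have hgγ : γ - b * γ ^ q = (1 - 1 / q) * γ := by rw [hγq]; ring
  -- a < γ - b γ^q
  have hqq : 0 < 1 - 1 / q := by
    have : 1 / q < 1 := by rw [div_lt_one hq0]; exact hq
    linarith
  have agγ : a < γ - b * γ ^ q := by
    rw [hgγ]
    calc a < (1 - δ) * (1 - 1 / q) * γ := ha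
      _ ≤ (1 - 1 / q) * γ := by nlinarith [mul_pos hqq hγpos]
  -- continuity of g(r) = r - b r^q
  have hcont : Continuous (fun r : ℝ => r - b * r ^ q) :=
    continuous_id.sub (continuous_const.mul (Real.continuous_rpow_const hq0.le))
  have hU : IsOpen {r : ℝ | a < r - b * r ^ q} :=
    isOpen_lt continuous_const hcont
  obtain ⟨ε, hε, hball⟩ := Metric.isOpen_iff.mp hU γ agγ
  -- G t never enters the ball
  have hforb : ∀ t ∈ I, G t ∉ Metric.ball γ ε := by
    intro t ht hmem
    have h1 : a < G t - b * G t ^ q := hball hmem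
    have h2 := hfG t ht
    linarith
  have hdich : ∀ t ∈ I, G t ≤ γ - ε ∨ γ + ε ≤ G t := by
    intro t ht
    have := hforb t ht
    rw [Metric.mem_ball, Real.dist_eq, not_lt] at this
    rcases abs_cases (G t - γ) with ⟨h, _⟩ | ⟨h, _⟩
    · right; linarith
    · left; linarith
  -- connectedness setup
  set u : Set ℝ := {r : ℝ | G r < γ - ε / 2} with hu_def
  set v : Set ℝ := {r : ℝ | γ + ε / 2 < G r} with hv_def
  have huo : IsOpen (I ∩ G ⁻¹' Set.Iio (γ - ε / 2)) :=
    hGcont.isOpen_inter_preimage hIopen isOpen_Iio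
  have hvo : IsOpen (I ∩ G ⁻¹' Set.Ioi (γ + ε / 2)) :=
    hGcont.isOpen_inter_preimage hIopen isOpen_Ioi
  have hdisj : Disjoint (I ∩ G ⁻¹' Set.Iio (γ - ε / 2)) (I ∩ G ⁻¹' Set.Ioi (γ + ε / 2)) := by
    rw [Set.disjoint_iff]
    rintro x ⟨⟨-, hx1⟩, ⟨-, hx2⟩⟩
    simp only [Set.mem_preimage, Set.mem_Iio, Set.mem_Ioi] at hx1 hx2
    linarith
  have hcover : I ⊆ (I ∩ G ⁻¹' Set.Iio (γ - ε / 2)) ∪ (I ∩ G ⁻¹' Set.Ioi (γ + ε / 2)) := by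
    intro t ht
    rcases hdich t ht with h | h
    · left; exact ⟨ht, by simp only [Set.mem_preimage, Set.mem_Iio]; linarith⟩
    · right; exact ⟨ht, by simp only [Set.mem_preimage, Set.mem_Ioi]; linarith⟩
  have hIpre : IsPreconnected I := hIconn.isPreconnected
  constructor
  · intro hG0
    -- G 0 ≤ γ - ε
    have h0 : G 0 ≤ γ - ε := by
      rcases hdich 0 hI0 with h | h
      · exact h
      · linarith
    have hsub : I ⊆ I ∩ G ⁻¹' Set.Iio (γ - ε / 2) := by
      refine hIpre.subset_left_of_subset_union huo hvo hdisj hcover ⟨0, hI0, hI0, ?_⟩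
      simp only [Set.mem_preimage, Set.mem_Iio]; linarith
    refine ⟨ε / (2 * γ), by positivity, fun t ht => ?_⟩
    have := (hsub ht).2
    simp only [Set.mem_preimage, Set.mem_Iio] at this
    have : G t < γ - ε / 2 := this
    have heq : (1 - ε / (2 * γ)) * γ = γ - ε / 2 := by field_simp
    linarith [heq ▸ this]
  · intro hG0
    have h0 : γ + ε ≤ G 0 := by
      rcases hdich 0 hI0 with h | h
      · linarith
      · exact h
    have hsub : I ⊆ I ∩ G ⁻¹' Set.Ioi (γ + ε / 2) := by
      refine (hIpre.subset_left_of_subset_union hvo huo hdisj.symm ?_ ⟨0, hI0, hI0, ?_⟩)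
      · rw [Set.union_comm]; exact hcover
      · simp only [Set.mem_preimage, Set.mem_Ioi]; linarith
    refine ⟨ε / (2 * γ), by positivity, fun t ht => ?_⟩
    have := (hsub ht).2
    simp only [Set.mem_preimage, Set.mem_Ioi] at this
    have heq : (1 + ε / (2 * γ)) * γ = γ + ε / 2 := by field_simp
    linarith
end
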